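/- Let X be a set and T a bounded operator on ℓ²(X) such that T lies in the universal ULF quasi-local algebra: for every ε > 0 there exists a binary relation E ⊆ X×X with all rows and columns of cardinality at most some M, such that for all Y₁, Y₂ ⊆ X with (Y₁ × Y₂) ∩ E = ∅ one has ‖P_{Y₁} T P_{Y₂}‖ < ε. Then T satisfies: for every ε > 0 there is M > 0 such that for every x ∈ X there exists v ∈ ℓ²(X) with #supp(v) ≤ M and ‖Tδ_x − v‖ < ε. -/

import Mathlib

/-!
Approximate `T δₓ` by its restriction to the column `Eₓ = {y | (y, x) ∈ E}`, which has at most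
`M` points. The error is `P_{Eₓᶜ} T P_{x} δₓ`, and `Eₓᶜ × {x}` misses `E`, so its norm is below `ε`.
-/

noncomputable section
open scoped ENNReal
open Filter

/-- The Hilbert space ℓ²(X). -/
abbrev L2 (X : Type*) := lp (fun _ : X => ℂ) 2

/-- The Dirac function δ_x ∈ ℓ²(X). -/
noncomputable def dirac {X : Type*} (x : X) : L2 X := by
  classical exact lp.single 2 x 1
lemma projRpowLe {X : Type*} (Y : Set X) (f : L2 X) (x : X) :
    ‖Y.indicator (⇑f) x‖ ^ (2 : ℝ≥0∞).toReal ≤ ‖f x‖ ^ (2 : ℝ≥0∞).toReal :=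
  Real.rpow_le_rpow (norm_nonneg _) (norm_indicator_le_norm_self (⇑f) x) (by norm_num)

lemma projMem {X : Type*} (Y : Set X) (f : L2 X) : Memℓp (Y.indicator (⇑f)) 2 :=
  memℓp_gen <| Summable.of_nonneg_of_le (fun x => by positivity) (projRpowLe Y f)
    ((lp.memℓp f).summable (by norm_num))

/-- The orthogonal projection of ℓ²(X) onto ℓ²(Y), for Y ⊆ X. -/
noncomputable def projL {X : Type*} (Y : Set X) : L2 X →L[ℂ] L2 X :=
  LinearMap.mkContinuous
    { toFun := fun f => ⟨Y.indicator (⇑f), projMem Y f⟩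
      map_add' := by
        intro f g; apply Subtype.ext; funext x
        show Y.indicator (⇑(f + g)) x = Y.indicator (⇑f) x + Y.indicator (⇑g) x
        rw [lp.coeFn_add]
        by_cases h : x ∈ Y <;>
          simp [Set.indicator_of_mem, Set.indicator_of_notMem, h]
      map_smul' := by
        intro c f; apply Subtype.ext; funext x
        show Y.indicator (⇑(c • f)) x = c • Y.indicator (⇑f) x
        rw [lp.coeFn_smul]
        by_cases h : x ∈ Y <;>
          simp [Set.indicator_of_mem, Set.indicator_of_notMem, h] }
    1
    (by
      intro f
      rw [one_mul]
      refine lp.norm_le_of_tsum_le (by norm_num) (norm_nonneg f) ?_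
      calc (∑' x : X, ‖Y.indicator (⇑f) x‖ ^ (2 : ℝ≥0∞).toReal)
          ≤ ∑' x : X, ‖f x‖ ^ (2 : ℝ≥0∞).toReal :=
            Summable.tsum_le_tsum (projRpowLe Y f)
              (Summable.of_nonneg_of_le (fun x => by positivity) (projRpowLe Y f)
                ((lp.memℓp f).summable (by norm_num)))
              ((lp.memℓp f).summable (by norm_num))
        _ = ‖f‖ ^ (2 : ℝ≥0∞).toReal := (lp.norm_rpow_eq_tsum (by norm_num) f).symm)

section

variable {X : Type*}

lemma coe_projL (Y : Set X) (f : L2 X) : ⇑(projL Y f) = Y.indicator ⇑f := rfl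

lemma projL_apply_of_notMem {Y : Set X} {y : X} (hy : y ∉ Y) (f : L2 X) : projL Y f y = 0 :=
  Set.indicator_of_notMem hy _

lemma norm_dirac (x : X) : ‖dirac x‖ = 1 := by
  classical
  simp [dirac, lp.norm_single two_pos]

lemma projL_singleton_dirac (x : X) : projL {x} (dirac x) = dirac x := by
  classical
  ext z
  rw [coe_projL]
  by_cases h : z = x
  · simp [h]
  · simp [h, dirac, lp.single_apply]

lemma sub_projL_eq_projL_compl (Y : Set X) (f : L2 X) : f - projL Y f = projL Yᶜ f := by
  ext z
  rw [lp.coeFn_sub, Pi.sub_apply, coe_projL, coe_projL]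
  by_cases h : z ∈ Y <;> simp [h]

lemma compl_column_prod_singleton_inter_eq_empty (E : Set (X × X)) (x : X) :
    ({y | (y, x) ∈ E}ᶜ ×ˢ {x}) ∩ E = ∅ := by
  ext ⟨a, b⟩
  simp only [Set.mem_inter_iff, Set.mem_prod, Set.mem_compl_iff, Set.mem_ofPred_eq,
    Set.mem_singleton_iff, Set.mem_empty_iff_false, iff_false, not_and]
  rintro ⟨ha, rfl⟩
  exact ha

lemma norm_apply_dirac_sub_projL_le (T : L2 X →L[ℂ] L2 X) (Y : Set X) (x : X) :
    ‖T (dirac x) - projL Y (T (dirac x))‖ ≤ ‖(projL Yᶜ).comp (T.comp (projL {x}))‖ := by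
  have hcomp : T (dirac x) - projL Y (T (dirac x))
      = (projL Yᶜ).comp (T.comp (projL {x})) (dirac x) := by
    simp only [ContinuousLinearMap.comp_apply, projL_singleton_dirac, sub_projL_eq_projL_compl]
  simpa [hcomp] using
    ((projL Yᶜ).comp (T.comp (projL {x}))).le_opNorm_of_le (norm_dirac x).le

end

/-- An operator that is quasi-local with respect to the universal uniformly
locally finite coarse structure on X has the uniform finite-approximation property. -/
theorem universalULF_quasiLocal_uniformApprox {X : Type*} (T : L2 X →L[ℂ] L2 X)
    (hql : ∀ ε : ℝ, 0 < ε → ∃ (E : Set (X × X)) (M : ℕ),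
      (∀ x : X,
        ({y : X | (y, x) ∈ E}.Finite ∧ {y : X | (y, x) ∈ E}.ncard ≤ M) ∧
        ({y : X | (x, y) ∈ E}.Finite ∧ {y : X | (x, y) ∈ E}.ncard ≤ M)) ∧
      (∀ Y₁ Y₂ : Set X, (Y₁ ×ˢ Y₂) ∩ E = ∅ →
        ‖(projL Y₁).comp (T.comp (projL Y₂))‖ < ε)) :
    ∀ ε : ℝ, 0 < ε → ∃ M : ℕ, ∀ x : X, ∃ v : L2 X,
      (∃ s : Finset X, s.card ≤ M ∧ ∀ y ∉ s, v y = 0) ∧ ‖T (dirac x) - v‖ < ε := by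
  intro ε hε
  obtain ⟨E, M, hE, hnorm⟩ := hql ε hε
  refine ⟨M, fun x => ?_⟩
  obtain ⟨⟨hfin, hcard⟩, -⟩ := hE x
  refine ⟨projL {y | (y, x) ∈ E} (T (dirac x)), ⟨hfin.toFinset, ?_, ?_⟩, ?_⟩
  · rwa [← Set.ncard_eq_toFinset_card _ hfin]
  · intro y hy
    exact projL_apply_of_notMem (by simpa using hy) _
  · exact (norm_apply_dirac_sub_projL_le T _ x).trans_lt
      (hnorm _ _ (compl_column_prod_singleton_inter_eq_empty E x))
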